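/- For every integer n ≥ 1, if W satisfies the minimal constraints, W·ln W and the powers W^k for 1 ≤ k ≤ n+1 are integrable, and the purity μ of W satisfies ∑_{k=1}^{n} (1 − μ/2)^k / k ≥ 1, then S[W] ≥ 1 + ln π. -/

import Mathlib

open Real MeasureTheory Finset

/-!
Write `f = 1 - πW`, which takes values in `[0, 1]`. Pointwise, `-log (πW) = ∑_{k ≥ 1} f^k / k`
dominates every partial sum. Integrating against the probability density `W` and applying Jensen's
inequality to each power `f^k` gives `S[W] - log π ≥ ∑_{k=1}^{n} (∫ W f)^k / k`, and
`∫ W f = 1 - π ∫ W² = 1 - μ/2`.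
-/

theorem sum_Icc_one_sub_pow_div_le_neg_log {x : ℝ} (hx0 : 0 < x) (hx1 : x ≤ 1) (n : ℕ) :
    ∑ k ∈ Icc 1 n, (1 - x) ^ k / k ≤ -log x := by
  have hs := hasSum_pow_div_log_of_abs_lt_one (x := 1 - x)
    (abs_lt.2 ⟨by linarith, by linarith⟩)
  rw [sub_sub_cancel] at hs
  calc ∑ k ∈ Icc 1 n, (1 - x) ^ k / k = ∑ i ∈ range n, (1 - x) ^ (i + 1) / (i + 1) := by
        rw [← Ico_add_one_right_eq_Icc, sum_Ico_eq_sum_range]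
        simp [add_comm]
    _ ≤ -log x :=
        sum_le_hasSum _ (fun i _ => div_nonneg (pow_nonneg (by linarith) _) (by positivity)) hs

section Probability

variable {α : Type*} [MeasurableSpace α] {ν : Measure α} [IsProbabilityMeasure ν]

theorem pow_integral_le_integral_pow {f : α → ℝ} (hf0 : ∀ᵐ a ∂ν, 0 ≤ f a)
    (hf : Integrable f ν) (k : ℕ) (hfk : Integrable (fun a => f a ^ k) ν) :
    (∫ a, f a ∂ν) ^ k ≤ ∫ a, f a ^ k ∂ν :=
  (convexOn_pow k).map_integral_le (continuous_pow k).continuousOn isClosed_Ici hf0 hf hfk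

theorem sum_Icc_one_sub_integral_pow_div_le_integral_neg_log {g : α → ℝ}
    (hg : AEStronglyMeasurable g ν) (hg0 : ∀ᵐ a ∂ν, 0 < g a)
    (hg1 : ∀ᵐ a ∂ν, g a ≤ 1) (hlog : Integrable (fun a => log (g a)) ν) (n : ℕ) :
    ∑ k ∈ Icc 1 n, (1 - ∫ a, g a ∂ν) ^ k / k ≤ ∫ a, -log (g a) ∂ν := by
  have hpow : ∀ k : ℕ, Integrable (fun a => (1 - g a) ^ k) ν := fun k =>
    .of_bound ((aestronglyMeasurable_const.sub hg).pow k) 1 <| by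
      filter_upwards [hg0, hg1] with a h0 h1
      rw [norm_pow, Real.norm_eq_abs, abs_of_nonneg (by linarith)]
      exact pow_le_one₀ (by linarith) (by linarith)
  have hsub : Integrable (fun a => 1 - g a) ν := by simpa using hpow 1
  have hgi : Integrable g ν :=
    ((integrable_const 1).sub hsub).congr (.of_forall fun a => sub_sub_cancel 1 (g a))
  have hmean : 1 - ∫ a, g a ∂ν = ∫ a, (1 - g a) ∂ν := by
    rw [integral_sub (integrable_const 1) hgi]
    simp
  have hterm : ∀ k ∈ Icc 1 n, Integrable (fun a => (1 - g a) ^ k / k) ν :=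
    fun k _ => (hpow k).div_const _
  calc ∑ k ∈ Icc 1 n, (1 - ∫ a, g a ∂ν) ^ k / k
      ≤ ∑ k ∈ Icc 1 n, (∫ a, (1 - g a) ^ k ∂ν) / k := by
        rw [hmean]
        gcongr with k
        exact pow_integral_le_integral_pow (by filter_upwards [hg1] with a h; linarith) hsub k
          (hpow k)
    _ = ∫ a, ∑ k ∈ Icc 1 n, (1 - g a) ^ k / k ∂ν := by
        rw [integral_finsetSum _ hterm]
        simp only [integral_div]
    _ ≤ ∫ a, -log (g a) ∂ν := by
        refine integral_mono_ae (integrable_finsetSum _ hterm) hlog.neg ?_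
        filter_upwards [hg0, hg1] with a h0 h1
        exact sum_Icc_one_sub_pow_div_le_neg_log h0 h1 n

end Probability

section Density

variable {α : Type*} [MeasurableSpace α] {μ : Measure α} {W : α → ℝ}

theorem integral_withDensity_toNNReal (hW : Measurable W) (hW0 : ∀ a, 0 ≤ W a)
    (h : α → ℝ) :
    ∫ a, h a ∂μ.withDensity (fun a => (W a).toNNReal) = ∫ a, W a * h a ∂μ := by
  simp_rw [integral_withDensity_eq_integral_smul hW.real_toNNReal, NNReal.smul_def,
    Real.coe_toNNReal _ (hW0 _), smul_eq_mul]

theorem integrable_withDensity_toNNReal_iff (hW : Measurable W) (hW0 : ∀ a, 0 ≤ W a)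
    {h : α → ℝ} :
    Integrable h (μ.withDensity (fun a => (W a).toNNReal)) ↔
      Integrable (fun a => W a * h a) μ := by
  simp_rw [integrable_withDensity_iff_integrable_smul hW.real_toNNReal, NNReal.smul_def,
    Real.coe_toNNReal _ (hW0 _), smul_eq_mul]

theorem ae_pos_withDensity_toNNReal (hW : Measurable W) :
    ∀ᵐ a ∂μ.withDensity (fun a => (W a).toNNReal), 0 < W a :=
  (ae_withDensity_iff hW.real_toNNReal.coe_nnreal_ennreal).2 <| .of_forall fun a ha => by
    simpa using ha

theorem isProbabilityMeasure_withDensity_toNNReal (hW0 : ∀ a, 0 ≤ W a)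
    (hint : Integrable W μ) (h1 : ∫ a, W a ∂μ = 1) :
    IsProbabilityMeasure (μ.withDensity (fun a => (W a).toNNReal)) := by
  constructor
  rw [withDensity_apply _ MeasurableSet.univ, Measure.restrict_univ]
  change ∫⁻ a, ENNReal.ofReal (W a) ∂μ = 1
  rw [← ofReal_integral_eq_lintegral_ofReal hint (.of_forall hW0), h1, ENNReal.ofReal_one]

end Density

theorem wigner_conjecture_of_purity_sum (n : ℕ)
    (W : ℝ × ℝ → ℝ) (hmeas : Measurable W)
    (hpos : ∀ z, 0 ≤ W z)
    (hnorm : ∫ z, W z = 1)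
    (hbound : ∀ z, Real.pi * W z ≤ 1)
    (hlog : Integrable (fun z => W z * Real.log (W z)))
    (hpow : ∀ k : ℕ, 1 ≤ k → k ≤ n + 1 → Integrable (fun z => (W z) ^ k))
    (hsum : ∑ k ∈ Finset.Icc 1 n,
        (1 - (2 * Real.pi * ∫ z, (W z) ^ 2) / 2) ^ k / (k : ℝ) ≥ 1) :
    (-∫ z, W z * Real.log (W z)) ≥ 1 + Real.log Real.pi := by
  have hW : Integrable W := by simpa using hpow 1 le_rfl (by omega)
  have := isProbabilityMeasure_withDensity_toNNReal hpos hW hnorm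
  have hlog_mul : ∀ z, W z * log (π * W z) = log π * W z + W z * log (W z) := fun z => by
    rcases (hpos z).eq_or_lt with h | h
    · simp [← h]
    · rw [log_mul pi_ne_zero h.ne']; ring
  have hlog_int : Integrable (fun z => W z * log (π * W z)) :=
    ((hW.const_mul (log π)).add hlog).congr (.of_forall fun z => (hlog_mul z).symm)
  have key := sum_Icc_one_sub_integral_pow_div_le_integral_neg_log (g := fun z => π * W z)
    (hmeas.const_mul π).aestronglyMeasurable
    (by filter_upwards [ae_pos_withDensity_toNNReal hmeas] with z hz; positivity)
    (.of_forall hbound) ((integrable_withDensity_toNNReal_iff hmeas hpos).2 hlog_int) n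
  rw [integral_withDensity_toNNReal hmeas hpos, integral_withDensity_toNNReal hmeas hpos] at key
  have hpurity : ∫ z, W z * (π * W z) = 2 * π * (∫ z, W z ^ 2) / 2 := by
    calc _ = π * ∫ z, W z ^ 2 := by rw [← integral_const_mul]; congr 1; ext z; ring
      _ = _ := by ring
  have hentropy : ∫ z, W z * -log (π * W z) = -log π - ∫ z, W z * log (W z) := by
    simp_rw [mul_neg, integral_neg, hlog_mul]
    rw [integral_add (hW.const_mul _) hlog, integral_const_mul, hnorm]; ring
  rw [hpurity, hentropy] at key
  linarith
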